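/- Let R be a commutative ring and (a_m)_{m≥0} a sequence in R with a₀ = 1. Then the formal power series Σ_{m≥0} a_m t^m is a unit in R[[t]] and its multiplicative inverse is Σ_{m≥0} ( Σ_{β ∈ C^m} M_β · ∏_{i≥1} a_i^{β_i} ) t^m. -/

import Mathlib

/-!
STATEMENT 19 (explicit inverse of a formal power series with constant term 1).

For `m ∈ ℕ`, `C^m = {(r₁, r₂, …) : rᵢ ∈ ℕ, Σᵢ i·rᵢ = m}`; since `i·rᵢ ≤ m` forces
`rᵢ ≤ m` and `rᵢ = 0` for `i > m`, such a tuple is faithfully encoded as a function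
`β : Fin m → Fin (m+1)`, where `β i` records `r_{i+1}`.
-/

open Finset

/-- The set `C^m` of tuples `(r₁, …, r_m)` of natural numbers with `Σᵢ i·rᵢ = m`,
encoded as functions `Fin m → Fin (m+1)` (`β i` records `r_{i+1}`). -/
def Cset (m : ℕ) : Finset (Fin m → Fin (m + 1)) :=
  Finset.univ.filter fun β => ∑ i : Fin m, (i.1 + 1) * (β i).1 = m

/-- `M_β = (−1)^{Σᵢ βᵢ} · (Σᵢ βᵢ choose β₁, β₂, …)` (a signed multinomial
coefficient). -/
def Mcoef {m : ℕ} (β : Fin m → Fin (m + 1)) : ℤ :=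
  (-1) ^ (∑ i : Fin m, (β i).1) * (Nat.multinomial Finset.univ fun i => (β i).1)

/-!
Write `Σ aₘ tᵐ = 1 + u` with `u = Σ_{i≥1} aᵢ tⁱ`. Since `t ∣ u`, the inverse agrees with
`Σ_{k ≤ m} (-u)ᵏ` modulo `t^{m+1}`, and only `a₁, …, aₘ` matter for the coefficient of `tᵐ`.
Expanding each `(a₁t + ⋯ + aₘtᵐ)ᵏ` by the multinomial theorem, the coefficient of `tᵐ` is the sum
over `β ∈ Cᵐ` with `Σ βᵢ = k` of `(k choose β) ∏ aᵢ^{βᵢ}`, and the sign `(-1)ᵏ` completes `M_β`.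
-/

open PowerSeries

theorem dvd_sub_geom_sum_neg_of_mul_eq_one {A : Type*} [CommRing A] {x f g u : A} {n : ℕ}
    (hfg : f * g = 1) (hu : x ∣ u) (hf : x ^ n ∣ f - (1 + u)) :
    x ^ n ∣ g - ∑ k ∈ range n, (-u) ^ k := by
  set S := ∑ k ∈ range n, (-u) ^ k
  have hgeom : (1 + u) * S = 1 - (-u) ^ n := by simpa using mul_neg_geom_sum (-u) n
  have hS : g - S = g * ((-u) ^ n - (f - (1 + u)) * S) := by
    linear_combination S * hfg - g * hgeom
  rw [hS]
  exact dvd_mul_of_dvd_right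
    (dvd_sub (pow_dvd_pow_of_dvd (dvd_neg.2 hu) n) (dvd_mul_of_dvd_left hf S)) g

/-- The weight `Σᵢ i·rᵢ` of `(r₁, …, rₙ)`, where `γ i` records `r_{i+1}`. -/
def weightedSum {n : ℕ} (γ : Fin n → ℕ) : ℕ := ∑ i, (i.1 + 1) * γ i

theorem sum_le_weightedSum {n : ℕ} (γ : Fin n → ℕ) : ∑ i, γ i ≤ weightedSum γ :=
  sum_le_sum fun i _ => Nat.le_mul_of_pos_left _ i.1.succ_pos

theorem sum_Cset_eq_sum_piAntidiag {M : Type*} [AddCommMonoid M] (m : ℕ)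
    (G : (Fin m → ℕ) → M) :
    ∑ β ∈ Cset m, G (fun i => (β i).1) =
      ∑ k ∈ range (m + 1),
        ∑ γ ∈ (piAntidiag (univ : Finset (Fin m)) k).filter (weightedSum · = m), G γ := by
  have hmaps (β) (hβ : β ∈ Cset m) : ∑ i, (β i).1 ∈ range (m + 1) := by
    simp only [Cset, mem_filter] at hβ
    exact mem_range.2 (Nat.lt_succ_of_le ((sum_le_weightedSum _).trans hβ.2.le))
  rw [← sum_fiberwise_of_maps_to hmaps]
  refine sum_congr rfl fun k _ => ?_
  refine sum_bij (fun β _ i => (β i).1) ?_ ?_ ?_ fun _ _ => rfl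
  · intro β hβ
    simp only [Cset, mem_filter, mem_univ, true_and] at hβ
    exact mem_filter.2 ⟨mem_piAntidiag.2 ⟨hβ.2, fun _ _ => mem_univ _⟩, hβ.1⟩
  · intro β₁ _ β₂ _ h
    funext i
    exact Fin.ext (congrFun h i)
  · intro γ hγ
    simp only [mem_filter, mem_piAntidiag] at hγ
    obtain ⟨⟨hk, -⟩, hw⟩ := hγ
    change ∑ i, γ i = k at hk
    have hγm (i) : γ i < m + 1 := by
      have := single_le_sum (fun j _ => Nat.zero_le (γ j)) (mem_univ i)
      have := sum_le_weightedSum γ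
      omega
    refine ⟨fun i => ⟨γ i, hγm i⟩, ?_, rfl⟩
    simp [Cset, hk, ← hw, weightedSum]

noncomputable def truncPos {R : Type*} [CommSemiring R] (a : ℕ → R) (n : ℕ) : R⟦X⟧ :=
  ∑ i : Fin n, C (a (i.1 + 1)) * X ^ (i.1 + 1)

theorem X_dvd_truncPos {R : Type*} [CommSemiring R] (a : ℕ → R) (n : ℕ) : X ∣ truncPos a n :=
  dvd_sum fun i _ => dvd_mul_of_dvd_right (dvd_pow_self X i.1.succ_ne_zero) _

theorem X_pow_dvd_mk_sub_truncPos {R : Type*} [CommRing R] {a : ℕ → R} (ha : a 0 = 1) (n : ℕ) :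
    X ^ (n + 1) ∣ PowerSeries.mk a - (1 + truncPos a n) := by
  rw [X_pow_dvd_iff]
  intro j hj
  simp only [truncPos, map_sub, map_add, map_sum, coeff_C_mul_X_pow, coeff_mk, coeff_one]
  rcases j with _ | j
  · simp [ha]
  · rw [Fin.sum_univ_eq_sum_range (fun i => if j + 1 = i + 1 then a (i + 1) else 0)]
    simp [show j < n by omega]

theorem coeff_truncPos_pow {R : Type*} [CommSemiring R] (a : ℕ → R) (n m k : ℕ) :
    coeff m (truncPos a n ^ k) =
      ∑ γ ∈ (piAntidiag (univ : Finset (Fin n)) k).filter (weightedSum · = m),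
        (Nat.multinomial univ γ : R) * ∏ i, a (i.1 + 1) ^ γ i := by
  have hterm (γ : Fin n → ℕ) : ∏ i, (C (a (i.1 + 1)) * X ^ (i.1 + 1)) ^ γ i =
      C (∏ i, a (i.1 + 1) ^ γ i) * (X : R⟦X⟧) ^ weightedSum γ := by
    simp only [mul_pow, prod_mul_distrib, map_prod, map_pow, ← pow_mul, prod_pow_eq_pow_sum,
      weightedSum]
  rw [truncPos, sum_pow_eq_sum_piAntidiag, map_sum, sum_filter]
  refine sum_congr rfl fun γ _ => ?_
  rw [hterm, ← map_natCast C, ← mul_assoc, ← map_mul, coeff_C_mul_X_pow]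
  simp only [eq_comm]

theorem coeff_geom_sum_neg_truncPos {R : Type*} [CommRing R] (a : ℕ → R) (m : ℕ) :
    coeff m (∑ k ∈ range (m + 1), (-truncPos a m) ^ k) =
      ∑ β ∈ Cset m, (Mcoef β : R) * ∏ i : Fin m, a (i.1 + 1) ^ (β i).1 := by
  have hM (β : Fin m → Fin (m + 1)) : (Mcoef β : R) =
      (-1) ^ (∑ i, (β i).1) * (Nat.multinomial univ fun i => (β i).1 : R) := by
    simp [Mcoef]
  simp only [hM, mul_assoc]
  rw [sum_Cset_eq_sum_piAntidiag m
    (fun γ => (-1) ^ (∑ i, γ i) * ((Nat.multinomial univ γ : R) * ∏ i, a (i.1 + 1) ^ γ i)),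
    map_sum]
  refine sum_congr rfl fun k _ => ?_
  rw [neg_pow, show ((-1 : R⟦X⟧) ^ k) = C ((-1) ^ k) by simp, coeff_C_mul, coeff_truncPos_pow,
    mul_sum]
  refine sum_congr rfl fun γ hγ => ?_
  rw [(mem_piAntidiag.1 (mem_filter.1 hγ).1).1]

theorem coeff_eq_of_mk_mul_eq_one {R : Type*} [CommRing R] {a : ℕ → R} (ha : a 0 = 1)
    {g : R⟦X⟧} (hg : PowerSeries.mk a * g = 1) (m : ℕ) :
    coeff m g = ∑ β ∈ Cset m, (Mcoef β : R) * ∏ i : Fin m, a (i.1 + 1) ^ (β i).1 := by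
  have hdvd := dvd_sub_geom_sum_neg_of_mul_eq_one hg (X_dvd_truncPos a m)
    (X_pow_dvd_mk_sub_truncPos ha m)
  rw [← coeff_geom_sum_neg_truncPos, ← sub_eq_zero, ← map_sub]
  exact X_pow_dvd_iff.1 hdvd m (lt_add_one m)

/-- Let `R` be a commutative ring and `(a_m)_{m≥0}` a sequence in `R` with `a₀ = 1`.
Then the formal power series `Σ_{m≥0} a_m t^m` is a unit in `R[[t]]` and its
multiplicative inverse is `Σ_{m≥0} ( Σ_{β ∈ C^m} M_β · ∏_{i≥1} a_i^{β_i} ) t^m`. -/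
theorem powerSeries_explicit_inverse (R : Type*) [CommRing R] (a : ℕ → R)
    (ha : a 0 = 1) :
    IsUnit (PowerSeries.mk a) ∧
      (PowerSeries.mk a) *
        (PowerSeries.mk fun m =>
          ∑ β ∈ Cset m, (Mcoef β : R) * ∏ i : Fin m, a (i.1 + 1) ^ (β i).1) = 1 := by
  have hunit : IsUnit (PowerSeries.mk a) := by simp [isUnit_iff_constantCoeff, ha]
  obtain ⟨g, hg⟩ := hunit.exists_right_inv
  have hinv : (PowerSeries.mk fun m =>
      ∑ β ∈ Cset m, (Mcoef β : R) * ∏ i : Fin m, a (i.1 + 1) ^ (β i).1) = g :=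
    ext fun m => by rw [coeff_mk, coeff_eq_of_mk_mul_eq_one ha hg]
  exact ⟨hunit, hinv ▸ hg⟩
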